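/- Let A be a 2×2 complex matrix with entries a_{ij} such that Im A is positive definite and Re a₁₁ = Re a₂₂ = 0. Set Δ := (2·(Im a₁₁)(Im a₂₂) + Re(a₁₂a₂₁))² − |a₁₂a₂₁|², which is positive. Then the integral over (v₁,v₂) ∈ ℝ² of |det(A − diag(v₁,v₂))|⁻² equals 2π²/√Δ. -/

import Mathlib

/-!
For fixed `v₁` the determinant `(a₁₁ - v₁) (a₂₂ - v₂) - a₁₂ a₂₁` is an affine function
`p v₂ + q` of `v₂`, so the inner integral is a Cauchy integral, equal to `π / |Im (p̄ q)|`.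
Here `-Im (p̄ q)` is a quadratic polynomial in `v₁` with leading coefficient `Im a₂₂ > 0` and
discriminant `-Δ`, and a second Cauchy integral gives `π · 2π / √Δ`. That `Δ > 0` is the
determinant condition `|a₁₂ - conj a₂₁|² < 4 Im a₁₁ Im a₂₂` for `Im A > 0`, combined with AM-GM.
-/

open MeasureTheory Matrix Real ComplexOrder

/-- The (operator) imaginary part of a complex matrix: `Im C = (C - Cᴴ)/(2i)`. -/
noncomputable def matIm {m : Type*} (C : Matrix m m ℂ) : Matrix m m ℂ :=
  (2 * Complex.I)⁻¹ • (C - Cᴴ)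

open ComplexConjugate

theorem Matrix.PosDef.sq_norm_lt_re_mul_re {M : Matrix (Fin 2) (Fin 2) ℂ} (hM : M.PosDef) :
    ‖M 0 1‖ ^ 2 < (M 0 0).re * (M 1 1).re := by
  have h10 : M 1 0 = conj (M 0 1) := by simpa using (congrFun₂ hM.1 1 0).symm
  have h00 := Complex.pos_iff.1 (hM.diag_pos (i := 0))
  have hdet := (Complex.pos_iff.1 hM.det_pos).1
  rw [det_fin_two, h10, Complex.sub_re, Complex.mul_re, Complex.mul_conj, Complex.ofReal_re,
    ← Complex.sq_norm, ← h00.2, zero_mul, sub_zero] at hdet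
  linarith

theorem matIm_apply {m : Type*} (C : Matrix m m ℂ) (i j : m) :
    matIm C i j = (C i j - conj (C j i)) / (2 * Complex.I) := by
  simp [matIm, div_eq_inv_mul]

theorem matIm_apply_self {m : Type*} (C : Matrix m m ℂ) (i : m) :
    matIm C i i = (C i i).im := by
  rw [matIm_apply, Complex.sub_conj]
  push_cast
  field_simp

theorem sq_norm_sub_conj (b c : ℂ) : ‖b - conj c‖ ^ 2 = ‖b‖ ^ 2 + ‖c‖ ^ 2 - 2 * (b * c).re := by
  simp only [Complex.sq_norm, Complex.normSq_apply, Complex.sub_re, Complex.sub_im,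
    Complex.conj_re, Complex.conj_im, Complex.mul_re]
  ring

theorem norm_mul_lt_of_posDef_matIm {A : Matrix (Fin 2) (Fin 2) ℂ} (hA : (matIm A).PosDef) :
    ‖A 0 1 * A 1 0‖ < 2 * ((A 0 0).im * (A 1 1).im) + (A 0 1 * A 1 0).re := by
  have h := hA.sq_norm_lt_re_mul_re
  rw [matIm_apply, matIm_apply_self, matIm_apply_self, norm_div, div_pow, sq_norm_sub_conj] at h
  simp only [Complex.ofReal_re, norm_mul, Complex.norm_I, Complex.norm_two] at h
  rw [norm_mul]
  nlinarith [sq_nonneg (‖A 0 1‖ - ‖A 1 0‖)]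

section Quadratic

variable {a b c : ℝ}

theorem quadratic_pos_of_discrim_neg (ha : 0 < a) (hd : discrim a b c < 0) (x : ℝ) :
    0 < a * x ^ 2 + b * x + c := by
  rw [discrim] at hd
  nlinarith [sq_nonneg (2 * a * x + b)]

/-- Completing the square: `a x² + b x + c = a ((x - x₀)² + γ²)` with `x₀ = -b / 2a` and
`γ = √(-discrim) / 2a`. -/
theorem inv_quadratic_eq_mul_cauchyPDFReal (ha : 0 < a) (hd : discrim a b c < 0) (x : ℝ) :
    (a * x ^ 2 + b * x + c)⁻¹ = 2 * π / √(-discrim a b c) *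
      ProbabilityTheory.cauchyPDFReal (-b / (2 * a)) (√(-discrim a b c) / (2 * a)).toNNReal x := by
  have hs : 0 < √(-discrim a b c) := sqrt_pos.2 (neg_pos.2 hd)
  have hs2 : √(-discrim a b c) ^ 2 = -(b ^ 2 - 4 * a * c) := by
    rw [sq_sqrt (neg_nonneg.2 hd.le), discrim]
  have hq := (quadratic_pos_of_discrim_neg ha hd x).ne'
  rw [ProbabilityTheory.cauchyPDFReal_def, coe_toNNReal _ (by positivity)]
  field_simp
  rw [div_eq_iff (by convert hq using 1; ring)]
  linear_combination hs2

theorem integrable_inv_quadratic (ha : 0 < a) (hd : discrim a b c < 0) :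
    Integrable fun x : ℝ => (a * x ^ 2 + b * x + c)⁻¹ := by
  simp_rw [inv_quadratic_eq_mul_cauchyPDFReal ha hd]
  exact ProbabilityTheory.integrable_cauchyPDFReal _ |>.const_mul _

theorem integral_inv_quadratic (ha : 0 < a) (hd : discrim a b c < 0) :
    ∫ x : ℝ, (a * x ^ 2 + b * x + c)⁻¹ = 2 * π / √(-discrim a b c) := by
  have hγ : (√(-discrim a b c) / (2 * a)).toNNReal ≠ 0 := by
    simpa using div_pos (sqrt_pos.2 (neg_pos.2 hd)) (by positivity)
  simp_rw [inv_quadratic_eq_mul_cauchyPDFReal ha hd, integral_const_mul,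
    ProbabilityTheory.integral_cauchyPDFReal_eq_one _ hγ, mul_one]

end Quadratic

section Affine

variable {p q : ℂ}

theorem sq_norm_mul_ofReal_add (p q : ℂ) (x : ℝ) :
    ‖p * x + q‖ ^ 2 = Complex.normSq p * x ^ 2 + 2 * (conj p * q).re * x + Complex.normSq q := by
  simp only [Complex.sq_norm, Complex.normSq_apply, Complex.add_re, Complex.add_im,
    Complex.mul_re, Complex.mul_im, Complex.ofReal_re, Complex.ofReal_im, Complex.conj_re,
    Complex.conj_im]
  ring

theorem discrim_normSq_eq (p q : ℂ) :
    discrim (Complex.normSq p) (2 * (conj p * q).re) (Complex.normSq q) =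
      -(2 * (conj p * q).im) ^ 2 := by
  simp only [discrim, Complex.normSq_apply, Complex.mul_re, Complex.mul_im, Complex.conj_re,
    Complex.conj_im]
  ring

theorem discrim_normSq_neg (h : (conj p * q).im ≠ 0) :
    discrim (Complex.normSq p) (2 * (conj p * q).re) (Complex.normSq q) < 0 := by
  rw [discrim_normSq_eq, neg_lt_zero]
  positivity

theorem normSq_pos_of_im_conj_mul_ne_zero (h : (conj p * q).im ≠ 0) : 0 < Complex.normSq p := by
  refine Complex.normSq_pos.2 fun hp => h ?_
  simp [hp]

theorem integrable_inv_sq_norm_mul_ofReal_add (h : (conj p * q).im ≠ 0) :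
    Integrable fun x : ℝ => (‖p * x + q‖ ^ 2)⁻¹ := by
  simp_rw [sq_norm_mul_ofReal_add]
  exact integrable_inv_quadratic (normSq_pos_of_im_conj_mul_ne_zero h) (discrim_normSq_neg h)

theorem integral_inv_sq_norm_mul_ofReal_add (h : (conj p * q).im ≠ 0) :
    ∫ x : ℝ, (‖p * x + q‖ ^ 2)⁻¹ = π / |(conj p * q).im| := by
  simp_rw [sq_norm_mul_ofReal_add]
  rw [integral_inv_quadratic (normSq_pos_of_im_conj_mul_ne_zero h) (discrim_normSq_neg h),
    discrim_normSq_eq, neg_neg, sqrt_sq_eq_abs, abs_mul, abs_two]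
  field_simp

end Affine

theorem integral_prod_of_nonneg {α β : Type*} [MeasurableSpace α] [MeasurableSpace β]
    {μ : Measure α} {ν : Measure β} [SFinite μ] [SFinite ν] {f : α × β → ℝ}
    (hf : AEStronglyMeasurable f (μ.prod ν)) (hf₀ : 0 ≤ f)
    (hslice : ∀ x, Integrable (fun y => f (x, y)) ν)
    (hint : Integrable (fun x => ∫ y, f (x, y) ∂ν) μ) :
    ∫ z, f z ∂(μ.prod ν) = ∫ x, ∫ y, f (x, y) ∂ν ∂μ := by
  refine integral_prod f ((integrable_prod_iff hf).2 ⟨ae_of_all _ hslice, ?_⟩)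
  simpa only [Real.norm_of_nonneg (hf₀ _)] using hint

theorem integral_inv_sq_norm_sub_mul_sub_sub (a d e : ℂ) (hd : 0 < d.im)
    (hΔ : 0 < (2 * (a.im * d.im) + e.re) ^ 2 - ‖e‖ ^ 2) :
    ∫ z : ℝ × ℝ, (‖(a - z.1) * (d - z.2) - e‖ ^ 2)⁻¹
      = 2 * π ^ 2 / √((2 * (a.im * d.im) + e.re) ^ 2 - ‖e‖ ^ 2) := by
  set b := e.im - 2 * d.im * a.re
  set c := d.im * Complex.normSq a - a.re * e.im + a.im * e.re
  have hdisc : discrim d.im b c = -((2 * (a.im * d.im) + e.re) ^ 2 - ‖e‖ ^ 2) := by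
    simp only [b, c, discrim, Complex.sq_norm, Complex.normSq_apply]
    ring
  have hneg : discrim d.im b c < 0 := by linarith
  have hslice (x y : ℝ) : (a - x) * (d - y) - e = (x - a) * y + ((a - x) * d - e) := by ring
  have him (x : ℝ) : (conj (x - a) * ((a - x) * d - e)).im = -(d.im * x ^ 2 + b * x + c) := by
    simp only [b, c, Complex.normSq_apply, Complex.mul_im, Complex.mul_re, Complex.sub_re,
      Complex.sub_im, Complex.conj_re, Complex.conj_im, Complex.ofReal_re, Complex.ofReal_im]
    ring
  have him_ne (x : ℝ) : (conj (x - a) * ((a - x) * d - e)).im ≠ 0 := by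
    rw [him]
    exact neg_ne_zero.2 (quadratic_pos_of_discrim_neg hd hneg x).ne'
  have hslice_int (x : ℝ) : ∫ y : ℝ, (‖(a - x) * (d - y) - e‖ ^ 2)⁻¹
      = π * (d.im * x ^ 2 + b * x + c)⁻¹ := by
    simp_rw [hslice, integral_inv_sq_norm_mul_ofReal_add (him_ne x), him, abs_neg,
      abs_of_pos (quadratic_pos_of_discrim_neg hd hneg x), div_eq_mul_inv]
  rw [Measure.volume_eq_prod, integral_prod_of_nonneg (by fun_prop) (fun z => by positivity)
    (fun x => by simpa only [hslice] using integrable_inv_sq_norm_mul_ofReal_add (him_ne x))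
    (by simpa only [hslice_int] using (integrable_inv_quadratic hd hneg).const_mul π)]
  simp_rw [hslice_int]
  rw [integral_const_mul, integral_inv_quadratic hd hneg, hdisc, neg_neg]
  ring

theorem integral_inv_abs_det_sq_general (A : Matrix (Fin 2) (Fin 2) ℂ)
    (hA : (matIm A).PosDef) :
    0 < (2 * ((A 0 0).im * (A 1 1).im) + (A 0 1 * A 1 0).re) ^ 2
        - ‖A 0 1 * A 1 0‖ ^ 2 ∧
    (∫ v : Fin 2 → ℝ,
        (‖(A - Matrix.diagonal (fun i => (v i : ℂ))).det‖ ^ 2)⁻¹)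
      = 2 * π ^ 2 /
        Real.sqrt ((2 * ((A 0 0).im * (A 1 1).im) + (A 0 1 * A 1 0).re) ^ 2
          - ‖A 0 1 * A 1 0‖ ^ 2) := by
  have hΔ := sub_pos.2 <| pow_lt_pow_left₀ (norm_mul_lt_of_posDef_matIm hA) (norm_nonneg _)
    two_ne_zero
  have hd : 0 < (A 1 1).im := by simpa [matIm_apply_self] using hA.diag_pos (i := 1)
  refine ⟨hΔ, ?_⟩
  rw [← integral_inv_sq_norm_sub_mul_sub_sub _ _ _ hd hΔ,
    ← (volume_preserving_finTwoArrow ℝ).symm.integral_comp' _]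
  simp [det_fin_two]

theorem integral_inv_abs_det_sq (A : Matrix (Fin 2) (Fin 2) ℂ)
    (hA : (matIm A).PosDef) (h11 : (A 0 0).re = 0) (h22 : (A 1 1).re = 0) :
    0 < (2 * ((A 0 0).im * (A 1 1).im) + (A 0 1 * A 1 0).re) ^ 2
        - ‖A 0 1 * A 1 0‖ ^ 2 ∧
    (∫ v : Fin 2 → ℝ,
        (‖(A - Matrix.diagonal (fun i => (v i : ℂ))).det‖ ^ 2)⁻¹)
      = 2 * π ^ 2 /
        Real.sqrt ((2 * ((A 0 0).im * (A 1 1).im) + (A 0 1 * A 1 0).re) ^ 2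
          - ‖A 0 1 * A 1 0‖ ^ 2) :=
  integral_inv_abs_det_sq_general A hA
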